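/- arXiv:2410.06093 — 2 statements merged into one kernel-verified Lean document; each statement's English description precedes it below -/
import Mathlib

section
/- If f : ℝ → ℝ is a Schwartz function that is even, non-negative, and monotone decreasing on [0,∞), then its self-convolution f * f is also even, non-negative, and monotone decreasing on [0,∞). -/
/-!
Evenness and non-negativity of `f * f` are immediate. For monotonicity, fix `0 ≤ a ≤ b` and put
`h y = f y * (f (a - y) - f (b - y))`, so that `(f * f) a - (f * f) b = ∫ h`. The reflection
`y ↦ a + b - y` preserves Lebesgue measure, hence `2 ∫ h = ∫ (h y + h (a + b - y))`, and since `f`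
is even the integrand equals `(f y - f (a + b - y)) * (f (a - y) - f (b - y))`. Both factors have
the sign of `(a + b) / 2 - y`, because an even function decreasing on `[0, ∞)` is decreasing in `|x|`.
-/

open MeasureTheory Set

section SymmetricDecreasing

variable {f g : ℝ → ℝ}

theorem le_of_abs_le_of_even_of_antitoneOn (heven : ∀ x, f (-x) = f x)
    (hmono : AntitoneOn f (Ici 0)) {u v : ℝ} (huv : |u| ≤ |v|) : f v ≤ f u := by
  have hf_abs : ∀ x, f |x| = f x := fun x => by
    rcases abs_choice x with hx | hx <;> rw [hx]
    exact heven x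
  rw [← hf_abs u, ← hf_abs v]
  exact hmono (abs_nonneg u) (abs_nonneg v) huv

theorem integral_mul_neg_sub_of_even (hf : ∀ x, f (-x) = f x) (hg : ∀ x, g (-x) = g x) (x : ℝ) :
    ∫ y, f y * g (-x - y) = ∫ y, f y * g (x - y) := by
  rw [← integral_neg_eq_self]
  congr 1 with y
  rw [hf, ← hg, neg_sub, sub_neg_eq_add, add_comm, sub_eq_add_neg]

theorem mul_sub_reflect_nonneg (hf : ∀ x, f (-x) = f x) (hf_mono : AntitoneOn f (Ici 0))
    (hg : ∀ x, g (-x) = g x) (hg_mono : AntitoneOn g (Ici 0)) {a b : ℝ} (ha : 0 ≤ a)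
    (hab : a ≤ b) (y : ℝ) :
    0 ≤ (f y - f (a + b - y)) * (g (a - y) - g (b - y)) := by
  have hf_le {u v : ℝ} : |u| ≤ |v| → f v ≤ f u := le_of_abs_le_of_even_of_antitoneOn hf hf_mono
  have hg_le {u v : ℝ} : |u| ≤ |v| → g v ≤ g u := le_of_abs_le_of_even_of_antitoneOn hg hg_mono
  rcases le_total y ((a + b) / 2) with hy | hy
  · refine mul_nonneg (sub_nonneg.2 (hf_le ?_)) (sub_nonneg.2 (hg_le ?_)) <;>
      rw [← sq_le_sq] <;> nlinarith
  · refine mul_nonneg_of_nonpos_of_nonpos (sub_nonpos.2 (hf_le ?_)) (sub_nonpos.2 (hg_le ?_)) <;>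
      rw [← sq_le_sq] <;> nlinarith

theorem antitoneOn_integral_mul_sub (hf : ∀ x, f (-x) = f x) (hf_mono : AntitoneOn f (Ici 0))
    (hg : ∀ x, g (-x) = g x) (hg_mono : AntitoneOn g (Ici 0))
    (hint : ∀ x, Integrable (fun y => f y * g (x - y))) :
    AntitoneOn (fun x => ∫ y, f y * g (x - y)) (Ici 0) := by
  intro a ha b _ hab
  set h : ℝ → ℝ := fun y => f y * (g (a - y) - g (b - y))
  have hh_int : Integrable h := by
    simpa only [h, mul_sub] using (hint a).sub' (hint b)
  have hh_symm : ∀ y, h y + h (a + b - y) = (f y - f (a + b - y)) * (g (a - y) - g (b - y)) := by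
    intro y
    have ha' : g (a - (a + b - y)) = g (b - y) := by rw [← hg]; ring_nf
    have hb' : g (b - (a + b - y)) = g (a - y) := by rw [← hg]; ring_nf
    simp only [h, ha', hb']
    ring
  have hh_nonneg : 0 ≤ ∫ y, h y := by
    have hsum : 0 ≤ ∫ y, (h y + h (a + b - y)) := integral_nonneg fun y => by
      rw [hh_symm]
      exact mul_sub_reflect_nonneg hf hf_mono hg hg_mono ha hab y
    rw [integral_add hh_int (hh_int.comp_sub_left (a + b)), integral_sub_left_eq_self] at hsum
    linarith
  have hdiff : ∫ y, h y = (∫ y, f y * g (a - y)) - ∫ y, f y * g (b - y) := by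
    rw [← integral_sub (hint a) (hint b)]
    simp only [h, mul_sub]
  show ∫ y, f y * g (b - y) ≤ ∫ y, f y * g (a - y)
  linarith

end SymmetricDecreasing

theorem SchwartzMap.integrable_mul_comp_sub (f g : SchwartzMap ℝ ℝ) (x : ℝ) :
    Integrable (fun y => f y * g (x - y)) :=
  f.integrable.mul_bdd (g.continuous.comp (continuous_sub_left x)).aestronglyMeasurable
    (Filter.Eventually.of_forall fun y => g.norm_le_seminorm ℝ (x - y))

/-- If `f : ℝ → ℝ` is a Schwartz function that is even, non-negative, and monotone
decreasing on `[0,∞)`, then its self-convolution `(f*f)(x) = ∫ f y * f (x - y) dy`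
is also even, non-negative, and monotone decreasing on `[0,∞)`. -/
theorem stmt1 (f : SchwartzMap ℝ ℝ)
    (heven : ∀ x, f (-x) = f x)
    (hnonneg : ∀ x, 0 ≤ f x)
    (hmono : AntitoneOn (fun x => f x) (Set.Ici (0 : ℝ))) :
    (∀ x : ℝ, (∫ y : ℝ, f y * f (-x - y)) = ∫ y : ℝ, f y * f (x - y)) ∧
    (∀ x : ℝ, 0 ≤ ∫ y : ℝ, f y * f (x - y)) ∧
    AntitoneOn (fun x : ℝ => ∫ y : ℝ, f y * f (x - y)) (Set.Ici (0 : ℝ)) :=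
  ⟨integral_mul_neg_sub_of_even heven heven,
    fun _ => integral_nonneg fun _ => mul_nonneg (hnonneg _) (hnonneg _),
    antitoneOn_integral_mul_sub heven hmono heven hmono (f.integrable_mul_comp_sub f)⟩
end

section
/- Let ψ̂ be an entire function such that for every N ∈ ℕ there exists C_N > 0 with |ψ̂(z)| ≤ C_N e^{|Im z|}/(1+|z|)^N for all z ∈ ℂ, and suppose ψ̂ is real and odd on ℝ. Define g(ξ) = -∫_{Re ξ}^{∞} ψ̂(t) dt - ∫_{γ₂} ψ̂(z) dz, where γ₂ is the straight segment from Re(ξ) to ξ. Then g is entire, g'(ξ) = ψ̂(ξ) for all ξ, g restricted to ℝ is a Schwartz function, and |g(ξ)| ≤ C(1+|ξ|) e^{|Im ξ|} for some constant C and all ξ ∈ ℂ. -/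
/-!
Since `ψ` is odd on `ℝ`, its integral over `ℝ` vanishes, so on the real axis
`g x = -∫_x^∞ ψ = ∫_{-∞}^x ψ`, and both tails decay as fast as `ψ` does. Off the axis, `g` is the
wedge integral of `ψ` from `0` (along `[0, Re ξ]`, then vertically to `ξ`) minus a constant; an
entire function has zero rectangle integrals, so this wedge integral is a primitive of `ψ`. The
derivatives of `g` on `ℝ` are derivatives of `ψ`, which decay by Cauchy's estimates on unit
circles: moving by at most `1` costs a factor `e` in `e^{|Im z|}` and `2^N` in `(1 + |z|)^N`.
Finally, the horizontal part of `g ξ` is at most `∫ |ψ|` and, by the bound with `N = 0`, the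
vertical one is at most `C₀ e^{|Im ξ|} |Im ξ|`.
-/

open MeasureTheory Complex Set Metric

section RealLine

variable {E : Type*} [NormedAddCommGroup E] {f : ℝ → E} {C : ℝ} {k : ℕ}

lemma div_one_add_abs_pow_le_mul_inv_one_add_sq (hC : 0 ≤ C) {x t : ℝ} (hxt : |x| ≤ |t|) :
    C / (1 + |t|) ^ (k + 2) ≤ C / (1 + |x|) ^ k * (1 + t ^ 2)⁻¹ := by
  have hsq : 1 + t ^ 2 ≤ (1 + |t|) ^ 2 := by nlinarith [abs_nonneg t, sq_abs t]
  have hpow : (1 + |x|) ^ k ≤ (1 + |t|) ^ k := by gcongr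
  calc C / (1 + |t|) ^ (k + 2) = C / ((1 + |t|) ^ k * (1 + |t|) ^ 2) := by rw [pow_add]
    _ ≤ C / ((1 + |x|) ^ k * (1 + t ^ 2)) := by gcongr
    _ = C / (1 + |x|) ^ k * (1 + t ^ 2)⁻¹ := by rw [← div_div, div_eq_mul_inv]

lemma abs_pow_mul_le_of_le_div_one_add_abs_pow {a x : ℝ} (ha : 0 ≤ a)
    (h : a ≤ C / (1 + |x|) ^ k) : |x| ^ k * a ≤ C :=
  calc |x| ^ k * a ≤ (1 + |x|) ^ k * a := by gcongr; linarith
    _ ≤ C := by rwa [← le_div_iff₀' (by positivity)]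

lemma integrable_of_norm_le_div_one_add_abs_sq (hf : AEStronglyMeasurable f)
    (hb : ∀ t, ‖f t‖ ≤ C / (1 + |t|) ^ 2) : Integrable f := by
  have hC : 0 ≤ C := by simpa using (norm_nonneg _).trans (hb 0)
  refine (integrable_inv_one_add_sq.const_mul C).mono' hf (.of_forall fun t => ?_)
  simpa using (hb t).trans
    (div_one_add_abs_pow_le_mul_inv_one_add_sq (k := 0) (x := 0) hC (by simp))

variable [NormedSpace ℝ E]

lemma norm_setIntegral_le_of_norm_le_div_one_add_abs_pow
    (hb : ∀ t, ‖f t‖ ≤ C / (1 + |t|) ^ (k + 2)) {S : Set ℝ} (hS : MeasurableSet S) {x : ℝ}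
    (hx : ∀ t ∈ S, |x| ≤ |t|) :
    ‖∫ t in S, f t‖ ≤ C * Real.pi / (1 + |x|) ^ k := by
  have hC : 0 ≤ C := by simpa using (norm_nonneg _).trans (hb 0)
  have hg : Integrable (fun t : ℝ => C / (1 + |x|) ^ k * (1 + t ^ 2)⁻¹) :=
    integrable_inv_one_add_sq.const_mul _
  calc ‖∫ t in S, f t‖ ≤ ∫ t in S, C / (1 + |x|) ^ k * (1 + t ^ 2)⁻¹ :=
        norm_integral_le_of_norm_le hg.integrableOn <| ae_restrict_of_forall_mem hS fun t ht =>
          (hb t).trans (div_one_add_abs_pow_le_mul_inv_one_add_sq hC (hx t ht))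
    _ ≤ ∫ t, C / (1 + |x|) ^ k * (1 + t ^ 2)⁻¹ :=
        setIntegral_le_integral hg (.of_forall fun t => by positivity)
    _ = C * Real.pi / (1 + |x|) ^ k := by
        rw [integral_const_mul, integral_univ_inv_one_add_sq]; ring

lemma integral_eq_zero_of_odd (hodd : ∀ t, f (-t) = -f t) : ∫ t, f t = 0 := by
  have : IsAddTorsionFree E := .of_isTorsionFree ℝ E
  simp_rw [← self_eq_neg, ← integral_neg, ← hodd, integral_neg_eq_self]

lemma norm_integral_Ioi_le_of_odd (hb : ∀ t, ‖f t‖ ≤ C / (1 + |t|) ^ (k + 2))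
    (hf : Integrable f) (hodd : ∀ t, f (-t) = -f t) (x : ℝ) :
    ‖∫ t in Ioi x, f t‖ ≤ C * Real.pi / (1 + |x|) ^ k := by
  rcases le_or_gt 0 x with hx | hx
  · refine norm_setIntegral_le_of_norm_le_div_one_add_abs_pow hb measurableSet_Ioi
      fun t ht => ?_
    rw [abs_of_nonneg hx, abs_of_pos (hx.trans_lt ht)]
    exact le_of_lt ht
  · have hsplit := intervalIntegral.integral_Iic_add_Ioi (b := x) hf.integrableOn hf.integrableOn
    rw [integral_eq_zero_of_odd hodd, add_eq_zero_iff_neg_eq] at hsplit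
    rw [← hsplit, norm_neg]
    refine norm_setIntegral_le_of_norm_le_div_one_add_abs_pow hb measurableSet_Iic
      fun t ht => ?_
    rw [abs_of_neg hx, abs_of_neg ((mem_Iic.1 ht).trans_lt hx)]
    exact neg_le_neg ht

end RealLine

lemma norm_ofReal_le_of_norm_le {ψ : ℂ → ℂ} {C : ℝ} {N : ℕ}
    (hb : ∀ z, ‖ψ z‖ ≤ C * Real.exp |z.im| / (1 + ‖z‖) ^ N) (t : ℝ) :
    ‖ψ t‖ ≤ C / (1 + |t|) ^ N := by
  simpa using hb t

lemma exp_abs_im_div_one_add_norm_pow_le {c w : ℂ} (h : ‖w - c‖ ≤ 1) (N : ℕ) :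
    Real.exp |w.im| / (1 + ‖w‖) ^ N ≤
      Real.exp 1 * 2 ^ N * (Real.exp |c.im| / (1 + ‖c‖) ^ N) := by
  have him : |w.im| ≤ 1 + |c.im| := by
    have := (abs_im_le_norm (w - c)).trans h
    rw [sub_im] at this
    linarith [abs_sub_abs_le_abs_sub w.im c.im]
  have hnorm : (1 + ‖c‖) / 2 ≤ 1 + ‖w‖ := by
    linarith [norm_sub_norm_le c w, norm_sub_rev c w, norm_nonneg w]
  calc Real.exp |w.im| / (1 + ‖w‖) ^ N ≤ Real.exp (1 + |c.im|) / ((1 + ‖c‖) / 2) ^ N := by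
        gcongr
    _ = Real.exp 1 * 2 ^ N * (Real.exp |c.im| / (1 + ‖c‖) ^ N) := by
        rw [Real.exp_add, div_pow]; field_simp

lemma norm_iteratedDeriv_le_of_norm_le {ψ : ℂ → ℂ} (hψ : Differentiable ℂ ψ) {C : ℝ} {N : ℕ}
    (hb : ∀ z, ‖ψ z‖ ≤ C * Real.exp |z.im| / (1 + ‖z‖) ^ N) (n : ℕ) (c : ℂ) :
    ‖iteratedDeriv n ψ c‖ ≤
      n.factorial * (C * Real.exp 1 * 2 ^ N) * Real.exp |c.im| / (1 + ‖c‖) ^ N := by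
  have hC : 0 ≤ C := by simpa using (norm_nonneg _).trans (hb 0)
  have hsphere : ∀ w ∈ sphere c 1,
      ‖ψ w‖ ≤ C * Real.exp 1 * 2 ^ N * Real.exp |c.im| / (1 + ‖c‖) ^ N := by
    intro w hw
    calc ‖ψ w‖ ≤ C * (Real.exp |w.im| / (1 + ‖w‖) ^ N) := by rw [← mul_div_assoc]; exact hb w
      _ ≤ C * (Real.exp 1 * 2 ^ N * (Real.exp |c.im| / (1 + ‖c‖) ^ N)) :=
          mul_le_mul_of_nonneg_left
            (exp_abs_im_div_one_add_norm_pow_le (mem_sphere_iff_norm.1 hw).le N) hC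
      _ = _ := by ring
  simpa [mul_div_assoc, mul_assoc] using
    norm_iteratedDeriv_le_of_forall_mem_sphere_norm_le n one_pos hψ.diffContOnCl hsphere

lemma abs_pow_mul_norm_iteratedDeriv_ofReal_le {ψ : ℂ → ℂ} (hψ : Differentiable ℂ ψ) {C : ℝ}
    {N : ℕ} (hb : ∀ z, ‖ψ z‖ ≤ C * Real.exp |z.im| / (1 + ‖z‖) ^ N) (n : ℕ) (x : ℝ) :
    |x| ^ N * ‖iteratedDeriv n ψ x‖ ≤ n.factorial * (C * Real.exp 1 * 2 ^ N) :=
  abs_pow_mul_le_of_le_div_one_add_abs_pow (norm_nonneg _) <| by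
    simpa using norm_iteratedDeriv_le_of_norm_le hψ hb n x

lemma Differentiable.iteratedDeriv_comp_ofReal {f : ℂ → ℂ} (hf : Differentiable ℂ f) (n : ℕ)
    (x : ℝ) : iteratedDeriv n (fun t : ℝ => f t) x = iteratedDeriv n f x := by
  induction n generalizing f with
  | zero => simp
  | succ n ih =>
    have hderiv : _root_.deriv (fun t : ℝ => f t) = fun t : ℝ => _root_.deriv f t :=
      funext fun t => (hf t).hasDerivAt.comp_ofReal.deriv
    rw [iteratedDeriv_succ', iteratedDeriv_succ', hderiv]
    exact ih (hf.contDiff (n := 2)).differentiable_deriv_two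

lemma exists_schwartzMap_eq_comp_ofReal {G : ℂ → ℂ} (hG : Differentiable ℂ G)
    (hdecay : ∀ k n : ℕ, ∃ C, ∀ x : ℝ, |x| ^ k * ‖iteratedDeriv n G x‖ ≤ C) :
    ∃ gr : SchwartzMap ℝ ℂ, ∀ x : ℝ, gr x = G x := by
  refine ⟨⟨fun x : ℝ => G x, (hG.contDiff.restrict_scalars ℝ).comp ofRealCLM.contDiff,
    fun k n => ?_⟩, fun _ => rfl⟩
  simp only [norm_iteratedFDeriv_eq_norm_iteratedDeriv, Real.norm_eq_abs,
    hG.iteratedDeriv_comp_ofReal]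
  exact hdecay k n

lemma Differentiable.hasDerivAt_wedgeIntegral {E : Type*} [NormedAddCommGroup E]
    [NormedSpace ℂ E] [CompleteSpace E] {f : ℂ → E} (hf : Differentiable ℂ f) (c z : ℂ) :
    HasDerivAt (fun w => wedgeIntegral c w f) (f z) z :=
  hf.differentiableOn.isConservativeOn.hasDerivAt_wedgeIntegral (r := ‖z - c‖ + 1)
    hf.continuous.continuousOn (by simp [mem_ball, dist_eq_norm])

lemma wedgeIntegral_zero_sub_integral_Ioi {f : ℂ → ℂ} (hf : Integrable (fun t : ℝ => f t))
    (ξ : ℂ) : wedgeIntegral 0 ξ f - ∫ t in Ioi (0 : ℝ), f t =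
      -(∫ t in Ioi ξ.re, f t) + ∫ s in (0 : ℝ)..ξ.im, f (ξ.re + s * I) * I := by
  have h := intervalIntegral.integral_Ici_sub_Ici' (a := 0) (b := ξ.re) hf.integrableOn
    hf.integrableOn
  simp only [integral_Ici_eq_integral_Ioi] at h
  simp only [wedgeIntegral, zero_re, zero_im, ofReal_zero, zero_mul, add_zero, ← h,
    intervalIntegral.integral_mul_const, smul_eq_mul]
  ring

lemma norm_integral_vertical_le {ψ : ℂ → ℂ} {C : ℝ} (hb : ∀ z, ‖ψ z‖ ≤ C * Real.exp |z.im|)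
    (x y : ℝ) : ‖∫ s in (0 : ℝ)..y, ψ (x + s * I) * I‖ ≤ C * Real.exp |y| * |y| := by
  have hC : 0 ≤ C := by simpa using (norm_nonneg _).trans (hb 0)
  have hbound : ∀ s ∈ uIoc 0 y, ‖ψ (x + s * I) * I‖ ≤ C * Real.exp |y| := fun s hs => by
    have hs : |s| ≤ |y| := by
      simpa using abs_sub_left_of_mem_uIcc (a := 0) (b := y) (uIoc_subset_uIcc hs)
    have hψ : ‖ψ (x + s * I)‖ ≤ C * Real.exp |s| := by simpa using hb (x + s * I)
    simpa using hψ.trans (by gcongr)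
  simpa using intervalIntegral.norm_integral_le_of_norm_le_const hbound

lemma norm_neg_integral_Ioi_add_integral_vertical_le {ψ : ℂ → ℂ} {C₀ C₂ : ℝ}
    (hb₀ : ∀ z, ‖ψ z‖ ≤ C₀ * Real.exp |z.im|) (hb₂ : ∀ t : ℝ, ‖ψ t‖ ≤ C₂ / (1 + |t|) ^ 2)
    (ξ : ℂ) :
    ‖-(∫ t in Ioi ξ.re, ψ t) + ∫ s in (0 : ℝ)..ξ.im, ψ (ξ.re + s * I) * I‖ ≤
      (C₂ * Real.pi + C₀) * (1 + ‖ξ‖) * Real.exp |ξ.im| := by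
  have hhor : ‖∫ t in Ioi ξ.re, ψ t‖ ≤ C₂ * Real.pi := by
    simpa using norm_setIntegral_le_of_norm_le_div_one_add_abs_pow (k := 0) (x := 0) hb₂
      measurableSet_Ioi (by simp)
  have hver := norm_integral_vertical_le hb₀ ξ.re ξ.im
  have hC₀ : 0 ≤ C₀ := by simpa using (norm_nonneg _).trans (hb₀ 0)
  have hC₂ : 0 ≤ C₂ := by simpa using (norm_nonneg _).trans (hb₂ 0)
  have hexp : 1 ≤ Real.exp |ξ.im| := Real.one_le_exp (abs_nonneg _)
  have him : |ξ.im| ≤ ‖ξ‖ := abs_im_le_norm ξ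
  calc _ ≤ C₂ * Real.pi + C₀ * Real.exp |ξ.im| * |ξ.im| :=
        (norm_add_le _ _).trans (by rw [norm_neg]; exact add_le_add hhor hver)
    _ ≤ C₂ * Real.pi * ((1 + ‖ξ‖) * Real.exp |ξ.im|) + C₀ * ((1 + ‖ξ‖) * Real.exp |ξ.im|) := by
        have h1 : 1 ≤ (1 + ‖ξ‖) * Real.exp |ξ.im| := by nlinarith [norm_nonneg ξ]
        have h2 : Real.exp |ξ.im| * |ξ.im| ≤ (1 + ‖ξ‖) * Real.exp |ξ.im| := by
          rw [mul_comm]; gcongr; linarith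
        rw [mul_assoc C₀]
        exact add_le_add (le_mul_of_one_le_right (by positivity) h1)
          (mul_le_mul_of_nonneg_left h2 hC₀)
    _ = _ := by ring

theorem stmt16_general (ψ : ℂ → ℂ) (hent : Differentiable ℂ ψ)
    (hbd : ∀ N : ℕ, ∃ C : ℝ, 0 < C ∧
      ∀ z : ℂ, ‖ψ z‖ ≤ C * Real.exp |z.im| / (1 + ‖z‖) ^ N)
    (hodd : ∀ x : ℝ, ψ ((-x : ℝ) : ℂ) = -ψ (x : ℂ))
    (g : ℂ → ℂ)
    (hg : ∀ ξ : ℂ, g ξ = -(∫ t in Set.Ioi ξ.re, ψ (t : ℂ))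
        + ∫ s in (0 : ℝ)..ξ.im, ψ (ξ.re + s * Complex.I) * Complex.I) :
    Differentiable ℂ g ∧
    (∀ ξ : ℂ, HasDerivAt g (ψ ξ) ξ) ∧
    (∃ gr : SchwartzMap ℝ ℂ, ∀ x : ℝ, gr x = g (x : ℂ)) ∧
    (∃ C : ℝ, 0 < C ∧ ∀ ξ : ℂ, ‖g ξ‖ ≤ C * (1 + ‖ξ‖) * Real.exp |ξ.im|) := by
  obtain ⟨C₀, hC₀, hb₀⟩ := hbd 0
  obtain ⟨C₂, hC₂, hb₂⟩ := hbd 2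
  have hint : Integrable (fun t : ℝ => ψ t) := integrable_of_norm_le_div_one_add_abs_sq
    (hent.continuous.comp continuous_ofReal).aestronglyMeasurable (norm_ofReal_le_of_norm_le hb₂)
  have hg_eq : g = fun ξ => wedgeIntegral 0 ξ ψ - ∫ t in Ioi (0 : ℝ), ψ t :=
    funext fun ξ => (hg ξ).trans (wedgeIntegral_zero_sub_integral_Ioi hint ξ).symm
  have hder : ∀ ξ, HasDerivAt g (ψ ξ) ξ := fun ξ =>
    hg_eq ▸ (hent.hasDerivAt_wedgeIntegral 0 ξ).sub_const _
  have hdiff : Differentiable ℂ g := fun ξ => (hder ξ).differentiableAt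
  refine ⟨hdiff, hder, exists_schwartzMap_eq_comp_ofReal hdiff fun k n => ?_,
    C₂ * Real.pi + C₀, by positivity, fun ξ => ?_⟩
  · rcases n with _ | m
    · obtain ⟨C, -, hb⟩ := hbd (k + 2)
      refine ⟨C * Real.pi, fun x => abs_pow_mul_le_of_le_div_one_add_abs_pow (norm_nonneg _) ?_⟩
      simpa [hg] using norm_integral_Ioi_le_of_odd (norm_ofReal_le_of_norm_le hb) hint hodd x
    · obtain ⟨C, -, hb⟩ := hbd k
      have hderiv : deriv g = ψ := funext fun ξ => (hder ξ).deriv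
      exact ⟨_, fun x => by
        simpa [iteratedDeriv_succ', hderiv] using
          abs_pow_mul_norm_iteratedDeriv_ofReal_le hent hb m x⟩
  · rw [hg]
    exact norm_neg_integral_Ioi_add_integral_vertical_le (by simpa using hb₀)
      (norm_ofReal_le_of_norm_le hb₂) ξ

/-- The antiderivative construction in the Paley–Wiener argument: if `ψ` is entire with
`|ψ z| ≤ C_N e^(|Im z|)/(1+|z|)^N` for every `N`, real and odd on `ℝ`, and
`g ξ = -∫_{Re ξ}^∞ ψ t dt + ∫_{γ₂} ψ z dz` (with `γ₂` the vertical segment from `Re ξ`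
to `ξ`), then `g` is entire with `g' = ψ`, `g` restricted to `ℝ` is Schwartz, and
`|g ξ| ≤ C (1 + |ξ|) e^(|Im ξ|)`. -/
theorem stmt16 (ψ : ℂ → ℂ) (hent : Differentiable ℂ ψ)
    (hbd : ∀ N : ℕ, ∃ C : ℝ, 0 < C ∧
      ∀ z : ℂ, ‖ψ z‖ ≤ C * Real.exp |z.im| / (1 + ‖z‖) ^ N)
    (hreal : ∀ x : ℝ, (ψ (x : ℂ)).im = 0)
    (hodd : ∀ x : ℝ, ψ ((-x : ℝ) : ℂ) = -ψ (x : ℂ))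
    (g : ℂ → ℂ)
    (hg : ∀ ξ : ℂ, g ξ = -(∫ t in Set.Ioi ξ.re, ψ (t : ℂ))
        + ∫ s in (0 : ℝ)..ξ.im, ψ (ξ.re + s * Complex.I) * Complex.I) :
    Differentiable ℂ g ∧
    (∀ ξ : ℂ, HasDerivAt g (ψ ξ) ξ) ∧
    (∃ gr : SchwartzMap ℝ ℂ, ∀ x : ℝ, gr x = g (x : ℂ)) ∧
    (∃ C : ℝ, 0 < C ∧ ∀ ξ : ℂ, ‖g ξ‖ ≤ C * (1 + ‖ξ‖) * Real.exp |ξ.im|) :=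
  stmt16_general ψ hent hbd hodd g hg
end
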